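/- Let f be an odd positive integer, let χ be a Dirichlet character modulo f with values in ℂ (extended to ℕ by χ(m) := χ(m mod f)), let r ≥ 1 be an integer, let h be an integer with h ≥ r, let q be a real number with 0 < q < 1, let x > 0 be real, and let s ∈ ℂ. Then [2]_q^r · Σ_{(m_1,…,m_r) ∈ ℕ^r} (-1)^{m_1+⋯+m_r} q^{Σ_{j=1}^r (h-j+1) m_j} (∏_{j=1}^r χ(m_j)) [m_1+⋯+m_r+x]_q^{-s} = ([2]_q^r/[2]_{q^f}^r) · [f]_q^{-s} · Σ_{(a_1,…,a_r) ∈ {0,…,f-1}^r} (-1)^{a_1+⋯+a_r} (∏_{j=1}^r χ(a_j)) q^{Σ_{j=1}^r (h-j+1) a_j} · ( [2]_{q^f}^r · Σ_{(k_1,…,k_r) ∈ ℕ^r} (-1)^{k_1+⋯+k_r} (q^f)^{Σ_{j=1}^r (h-j+1) k_j} [k_1+⋯+k_r+(x+a_1+⋯+a_r)/f]_{q^f}^{-s} ), where for a positive real t, t^{-s} := exp(-s·log t), and all series converge absolutely. -/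

import Mathlib

/-- The `q`-number `[y]_q = (1 - q^y)/(1 - q)`, with a real exponent (rpow). -/
noncomputable def qnum (q y : ℝ) : ℝ := (1 - q ^ y) / (1 - q)

/-!
Write each index as `m_j = a_j + f k_j` with `0 ≤ a_j < f`. Because `f` is odd, the sign
`(-1)^{|m|}` and the weight `q^{Σ (h-j+1) m_j}` factor into their values at `a` and at `k` (the
latter with base `q^f`), `χ(m_j) = χ(a_j)`, and `[f y]_q = [f]_q [y]_{q^f}` splits off `[f]_q^{-s}`.
All series converge absolutely: the weight is at most `q^{|m|}`, and `|[y]_q^{-s}|` is bounded for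
`y ≥ x > 0` since `[y]_q` stays in `[[x]_q, 1/(1-q)]`. So the series over `m` can be rearranged
into a finite sum over `a` of series over `k`.
-/

open Finset

section QNumber

variable {q : ℝ}

lemma qnum_pos (hq0 : 0 ≤ q) (hq1 : q < 1) {y : ℝ} (hy : 0 < y) : 0 < qnum q y :=
  div_pos (sub_pos.2 (Real.rpow_lt_one hq0 hq1 hy)) (sub_pos.2 hq1)

lemma qnum_le_inv_one_sub (hq0 : 0 ≤ q) (hq1 : q < 1) (y : ℝ) : qnum q y ≤ (1 - q)⁻¹ := by
  rw [qnum, div_eq_mul_inv]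
  have := Real.rpow_nonneg hq0 y
  exact mul_le_of_le_one_left (inv_nonneg.2 (sub_nonneg.2 hq1.le)) (by linarith)

lemma qnum_monotone (hq0 : 0 < q) (hq1 : q < 1) : Monotone (qnum q) := fun _ _ hyy' =>
  div_le_div_of_nonneg_right
    (sub_le_sub_left (Real.rpow_le_rpow_of_exponent_ge hq0 hq1.le hyy') 1) (sub_nonneg.2 hq1.le)

lemma qnum_natCast_mul (hq0 : 0 ≤ q) (hq1 : q < 1) {f : ℕ} (hf : f ≠ 0) (y : ℝ) :
    qnum q (f * y) = qnum q f * qnum (q ^ f) y := by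
  have hqf : 1 - q ^ f ≠ 0 := (sub_pos.2 (pow_lt_one₀ hq0 hq1 hf)).ne'
  have hq : 1 - q ≠ 0 := (sub_pos.2 hq1).ne'
  rw [qnum, qnum, qnum, Real.rpow_mul hq0, Real.rpow_natCast]
  field_simp

end QNumber

lemma rpow_le_max_of_mem_Icc {lo hi z : ℝ} (hlo : 0 < lo) (hz : z ∈ Set.Icc lo hi) (t : ℝ) :
    z ^ t ≤ max (lo ^ t) (hi ^ t) := by
  rcases le_total 0 t with ht | ht
  · exact le_max_of_le_right (Real.rpow_le_rpow (hlo.le.trans hz.1) hz.2 ht)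
  · exact le_max_of_le_left (Real.rpow_le_rpow_of_nonpos hlo hz.1 ht)

lemma exists_norm_qnum_cpow_le {q : ℝ} (hq0 : 0 < q) (hq1 : q < 1) {y : ℝ} (hy : 0 < y) (s : ℂ) :
    ∃ C, ∀ z, y ≤ z → ‖((qnum q z : ℝ) : ℂ) ^ s‖ ≤ C := by
  refine ⟨max (qnum q y ^ s.re) ((1 - q)⁻¹ ^ s.re), fun z hz => ?_⟩
  have hqy := qnum_pos hq0.le hq1 hy
  rw [Complex.norm_cpow_eq_rpow_re_of_pos (hqy.trans_le (qnum_monotone hq0 hq1 hz))]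
  exact rpow_le_max_of_mem_Icc hqy ⟨qnum_monotone hq0 hq1 hz, qnum_le_inv_one_sub hq0.le hq1 z⟩ _

lemma summable_pi_prod {α : Type*} {g : α → ℝ} (hg0 : 0 ≤ g) (hg : Summable g) (r : ℕ) :
    Summable fun m : Fin r → α => ∏ j, g (m j) := by
  induction r with
  | zero => exact Summable.of_finite
  | succ n ih =>
    refine (Fin.consEquiv fun _ => α).summable_iff.1 ?_
    refine (hg.mul_of_nonneg ih hg0 fun m => prod_nonneg fun j _ => hg0 _).congr fun p => ?_
    simp [Fin.prod_univ_succ]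

section AlternatingWeight

variable {r : ℕ}

noncomputable def altQWeight (Q : ℝ) (c : Fin r → ℤ) (m : Fin r → ℕ) : ℂ :=
  (-1 : ℂ) ^ (∑ j, m j) * ((Q ^ (∑ j, c j * (m j : ℤ)) : ℝ) : ℂ)

lemma norm_altQWeight_le {Q : ℝ} (hQ0 : 0 < Q) (hQ1 : Q ≤ 1) {c : Fin r → ℤ}
    (hc : ∀ j, 1 ≤ c j) (m : Fin r → ℕ) : ‖altQWeight Q c m‖ ≤ ∏ j, Q ^ m j := by
  have hexp : ((∑ j, m j : ℕ) : ℤ) ≤ ∑ j, c j * (m j : ℤ) := by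
    push_cast
    exact sum_le_sum fun j _ => le_mul_of_one_le_left (Nat.cast_nonneg _) (hc j)
  rw [altQWeight, norm_mul, norm_pow, norm_neg, norm_one, one_pow, one_mul, Complex.norm_real,
    Real.norm_of_nonneg (zpow_pos hQ0 _).le, prod_pow_eq_pow_sum, ← zpow_natCast]
  exact zpow_le_zpow_right_of_le_one₀ hQ0 hQ1 hexp

lemma summable_altQWeight_mul {Q : ℝ} (hQ0 : 0 < Q) (hQ1 : Q < 1) {c : Fin r → ℤ}
    (hc : ∀ j, 1 ≤ c j) {g : (Fin r → ℕ) → ℂ} {C : ℝ} (hg : ∀ m, ‖g m‖ ≤ C) :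
    Summable fun m => altQWeight Q c m * g m := by
  have hgeom := summable_pi_prod (fun n => pow_nonneg hQ0.le n)
    (summable_geometric_of_lt_one hQ0.le hQ1) r
  refine Summable.of_norm_bounded (hgeom.mul_right C) fun m => ?_
  rw [norm_mul]
  exact mul_le_mul (norm_altQWeight_le hQ0 hQ1.le hc m) (hg m) (norm_nonneg _)
    (prod_nonneg fun j _ => pow_nonneg hQ0.le _)

lemma altQWeight_add_mul {Q : ℝ} (hQ : Q ≠ 0) (c : Fin r → ℤ) {f : ℕ} (hf : Odd f)
    (a k : Fin r → ℕ) :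
    altQWeight Q c (fun j => a j + f * k j) = altQWeight Q c a * altQWeight (Q ^ f) c k := by
  have hsign : (-1 : ℂ) ^ (∑ j, (a j + f * k j)) = (-1) ^ (∑ j, a j) * (-1) ^ (∑ j, k j) := by
    rw [sum_add_distrib, ← mul_sum, pow_add, pow_mul, hf.neg_one_pow]
  have hexp : ∑ j, c j * ((a j + f * k j : ℕ) : ℤ)
      = ∑ j, c j * (a j : ℤ) + f * ∑ j, c j * (k j : ℤ) := by
    rw [mul_sum, ← sum_add_distrib]
    exact sum_congr rfl fun j _ => by push_cast; ring
  rw [altQWeight, altQWeight, altQWeight, hsign, hexp, zpow_add₀ hQ, zpow_mul, zpow_natCast]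
  push_cast
  ring

lemma qnum_sum_add_mul {q : ℝ} (hq0 : 0 ≤ q) (hq1 : q < 1) {f : ℕ} (hf : f ≠ 0)
    (a k : Fin r → ℕ) (x : ℝ) :
    qnum q ((∑ j, (a j + f * k j) : ℕ) + x)
      = qnum q f * qnum (q ^ f) ((∑ j, k j : ℕ) + (x + ∑ j, (a j : ℝ)) / f) := by
  rw [← qnum_natCast_mul hq0 hq1 hf]
  congr 1
  push_cast
  field_simp
  rw [sum_add_distrib, ← mul_sum]
  ring

def piDivModEquiv (r f : ℕ) [NeZero f] : (Fin r → Fin f) × (Fin r → ℕ) ≃ (Fin r → ℕ) :=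
  (Equiv.prodComm _ _).trans <| (Equiv.arrowProdEquivProdArrow _ _ _).symm.trans <|
    Equiv.piCongrRight fun _ => (Nat.divModEquiv f).symm

lemma piDivModEquiv_apply {f : ℕ} [NeZero f] (a : Fin r → Fin f) (k : Fin r → ℕ) :
    piDivModEquiv r f (a, k) = fun j => a j + f * k j := by
  ext j
  simp only [piDivModEquiv, Equiv.trans_apply, Equiv.prodComm_apply, Prod.swap_prod_mk,
    Equiv.piCongrRight_apply, Pi.map_apply, Equiv.arrowProdEquivProdArrow_symm_apply,
    Nat.divModEquiv_symm_apply]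
  ring

lemma summable_altQWeight_mul_qnum_cpow {Q : ℝ} (hQ0 : 0 < Q) (hQ1 : Q < 1) {c : Fin r → ℤ}
    (hc : ∀ j, 1 ≤ c j) {y : ℝ} (hy : 0 < y) {w : (Fin r → ℕ) → ℂ} (hw : ∀ m, ‖w m‖ ≤ 1)
    (s : ℂ) :
    Summable fun m => altQWeight Q c m * w m * ((qnum Q ((∑ j, m j : ℕ) + y) : ℝ) : ℂ) ^ s := by
  obtain ⟨C, hC⟩ := exists_norm_qnum_cpow_le hQ0 hQ1 hy s
  have hbound (m : Fin r → ℕ) : ‖w m * ((qnum Q ((∑ j, m j : ℕ) + y) : ℝ) : ℂ) ^ s‖ ≤ C := by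
    have hD := hC _ (le_add_of_nonneg_left (Nat.cast_nonneg (∑ j, m j)))
    rw [norm_mul]
    exact (mul_le_mul (hw m) hD (norm_nonneg _) zero_le_one).trans_eq (one_mul C)
  exact (summable_altQWeight_mul hQ0 hQ1 hc hbound).congr fun m => (mul_assoc _ _ _).symm

lemma norm_prod_dirichletCharacter_le_one {f : ℕ} (χ : DirichletCharacter ℂ f)
    (m : Fin r → ℕ) : ‖∏ j, χ (m j)‖ ≤ 1 :=
  (Finset.norm_prod_le _ _).trans <|
    prod_le_one (fun _ _ => norm_nonneg _) fun _ _ => χ.norm_le_one _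

theorem tsum_altQWeight_mul_dirichletCharacter {f : ℕ} [NeZero f] (hf : Odd f)
    (χ : DirichletCharacter ℂ f) {c : Fin r → ℤ} (hc : ∀ j, 1 ≤ c j) {q : ℝ} (hq0 : 0 < q)
    (hq1 : q < 1) {x : ℝ} (hx : 0 < x) (s : ℂ) :
    ∑' m : Fin r → ℕ, altQWeight q c m * (∏ j, χ (m j)) *
        ((qnum q ((∑ j, m j : ℕ) + x) : ℝ) : ℂ) ^ (-s)
      = ((qnum q f : ℝ) : ℂ) ^ (-s) * ∑ a : Fin r → Fin f,
          altQWeight q c (fun j => a j) * (∏ j, χ (a j : ℕ)) *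
            ∑' k, altQWeight (q ^ f) c k *
              ((qnum (q ^ f) ((∑ j, k j : ℕ) + (x + ∑ j, ((a j : ℕ) : ℝ)) / f) : ℝ) : ℂ)
                ^ (-s) := by
  have hsum := summable_altQWeight_mul_qnum_cpow hq0 hq1 hc hx
    (norm_prod_dirichletCharacter_le_one χ) (-s)
  have hsplit := (piDivModEquiv r f).summable_iff.2 hsum
  rw [Function.comp_def] at hsplit
  rw [← (piDivModEquiv r f).tsum_eq, hsplit.tsum_prod, tsum_fintype, mul_sum]
  refine sum_congr rfl fun a _ => ?_
  rw [← mul_assoc, ← mul_assoc, ← tsum_mul_left]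
  refine tsum_congr fun k => ?_
  have hχ : ∏ j, χ ((a j + f * k j : ℕ) : ZMod f) = ∏ j, χ (a j : ℕ) :=
    prod_congr rfl fun j _ => by simp
  have hf0 : (0 : ℝ) < f := Nat.cast_pos.2 (NeZero.pos f)
  have hy : 0 < ((∑ j, k j : ℕ) : ℝ) + (x + ∑ j, ((a j : ℕ) : ℝ)) / f :=
    add_pos_of_nonneg_of_pos (Nat.cast_nonneg _) (div_pos (by positivity) hf0)
  rw [piDivModEquiv_apply, altQWeight_add_mul hq0.ne' c hf, hχ,
    qnum_sum_add_mul hq0.le hq1 (NeZero.ne f), Complex.ofReal_mul,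
    Complex.mul_cpow_ofReal_nonneg (qnum_pos hq0.le hq1 hf0).le
      (qnum_pos (pow_nonneg hq0.le f) (pow_lt_one₀ hq0.le hq1 (NeZero.ne f)) hy).le]
  ring

end AlternatingWeight

theorem stmt10_general (f : ℕ) (hf : Odd f) (χ : DirichletCharacter ℂ f)
    (r : ℕ) (h : ℤ) (hh : (r : ℤ) ≤ h)
    (q : ℝ) (hq0 : 0 < q) (hq1 : q < 1) (x : ℝ) (hx : 0 < x) (s : ℂ) :
    Summable (fun m : Fin r → ℕ =>
      (-1 : ℂ) ^ (∑ j, m j) *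
        ((q ^ (∑ j : Fin r, (h - ((j : ℤ) + 1) + 1) * (m j : ℤ)) : ℝ) : ℂ) *
          (∏ j, χ ((m j : ℕ) : ZMod f)) *
            ((qnum q (((∑ j, m j : ℕ) : ℝ) + x) : ℝ) : ℂ) ^ (-s)) ∧
    (∀ a : Fin r → Fin f, Summable (fun k : Fin r → ℕ =>
      (-1 : ℂ) ^ (∑ j, k j) *
        (((q ^ f) ^ (∑ j : Fin r, (h - ((j : ℤ) + 1) + 1) * (k j : ℤ)) : ℝ) : ℂ) *
          ((qnum (q ^ f) (((∑ j, k j : ℕ) : ℝ) + (x + ∑ j, ((a j : ℕ) : ℝ)) / f) : ℝ) : ℂ)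
            ^ (-s))) ∧
    (1 + (q : ℂ)) ^ r * (∑' m : Fin r → ℕ,
        (-1 : ℂ) ^ (∑ j, m j) *
          ((q ^ (∑ j : Fin r, (h - ((j : ℤ) + 1) + 1) * (m j : ℤ)) : ℝ) : ℂ) *
            (∏ j, χ ((m j : ℕ) : ZMod f)) *
              ((qnum q (((∑ j, m j : ℕ) : ℝ) + x) : ℝ) : ℂ) ^ (-s))
      = ((1 + (q : ℂ)) ^ r / (1 + (q : ℂ) ^ f) ^ r) *
          ((qnum q (f : ℝ) : ℝ) : ℂ) ^ (-s) *
          ∑ a : Fin r → Fin f,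
            (-1 : ℂ) ^ (∑ j, (a j : ℕ)) * (∏ j, χ (((a j : ℕ) : ℕ) : ZMod f)) *
              ((q ^ (∑ j : Fin r, (h - ((j : ℤ) + 1) + 1) * ((a j : ℕ) : ℤ)) : ℝ) : ℂ) *
                ((1 + (q : ℂ) ^ f) ^ r * ∑' k : Fin r → ℕ,
                  (-1 : ℂ) ^ (∑ j, k j) *
                    (((q ^ f) ^ (∑ j : Fin r, (h - ((j : ℤ) + 1) + 1) * (k j : ℤ)) : ℝ) : ℂ) *
                      ((qnum (q ^ f)
                        (((∑ j, k j : ℕ) : ℝ) + (x + ∑ j, ((a j : ℕ) : ℝ)) / f) : ℝ) : ℂ)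
                        ^ (-s)) := by
  have : NeZero f := ⟨hf.pos.ne'⟩
  have hf0 : (0 : ℝ) < f := Nat.cast_pos.2 hf.pos
  have hc (j : Fin r) : 1 ≤ h - ((j : ℤ) + 1) + 1 := by have := j.isLt; omega
  have hqf1 : q ^ f < 1 := pow_lt_one₀ hq0.le hq1 hf.pos.ne'
  refine ⟨summable_altQWeight_mul_qnum_cpow hq0 hq1 hc hx
    (norm_prod_dirichletCharacter_le_one χ) (-s), fun a => ?_, ?_⟩
  · refine (summable_altQWeight_mul_qnum_cpow (pow_pos hq0 f) hqf1 hc (w := 1) ?_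
      (fun _ => norm_one.le) (-s)).congr fun k => by rw [Pi.one_apply, mul_one]; rfl
    exact div_pos (by positivity) hf0
  · have hq2 : (1 + (q : ℂ) ^ f) ^ r ≠ 0 := by
      exact_mod_cast (by positivity : (1 + q ^ f) ^ r ≠ 0)
    have hsplit := tsum_altQWeight_mul_dirichletCharacter hf χ hc hq0 hq1 hx s
    simp only [altQWeight] at hsplit
    rw [hsplit, ← mul_assoc, mul_sum, mul_sum]
    refine sum_congr rfl fun a _ => ?_
    -- keeps `field_simp` from normalising inside the inner series
    generalize (∑' k : Fin r → ℕ, (_ : ℂ)) = T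
    field_simp

theorem stmt10 (f : ℕ) (hf0 : 0 < f) (hf : Odd f) (χ : DirichletCharacter ℂ f)
    (r : ℕ) (hr : 1 ≤ r) (h : ℤ) (hh : (r : ℤ) ≤ h)
    (q : ℝ) (hq0 : 0 < q) (hq1 : q < 1) (x : ℝ) (hx : 0 < x) (s : ℂ) :
    Summable (fun m : Fin r → ℕ =>
      (-1 : ℂ) ^ (∑ j, m j) *
        ((q ^ (∑ j : Fin r, (h - ((j : ℤ) + 1) + 1) * (m j : ℤ)) : ℝ) : ℂ) *
          (∏ j, χ ((m j : ℕ) : ZMod f)) *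
            ((qnum q (((∑ j, m j : ℕ) : ℝ) + x) : ℝ) : ℂ) ^ (-s)) ∧
    (∀ a : Fin r → Fin f, Summable (fun k : Fin r → ℕ =>
      (-1 : ℂ) ^ (∑ j, k j) *
        (((q ^ f) ^ (∑ j : Fin r, (h - ((j : ℤ) + 1) + 1) * (k j : ℤ)) : ℝ) : ℂ) *
          ((qnum (q ^ f) (((∑ j, k j : ℕ) : ℝ) + (x + ∑ j, ((a j : ℕ) : ℝ)) / f) : ℝ) : ℂ)
            ^ (-s))) ∧
    (1 + (q : ℂ)) ^ r * (∑' m : Fin r → ℕ,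
        (-1 : ℂ) ^ (∑ j, m j) *
          ((q ^ (∑ j : Fin r, (h - ((j : ℤ) + 1) + 1) * (m j : ℤ)) : ℝ) : ℂ) *
            (∏ j, χ ((m j : ℕ) : ZMod f)) *
              ((qnum q (((∑ j, m j : ℕ) : ℝ) + x) : ℝ) : ℂ) ^ (-s))
      = ((1 + (q : ℂ)) ^ r / (1 + (q : ℂ) ^ f) ^ r) *
          ((qnum q (f : ℝ) : ℝ) : ℂ) ^ (-s) *
          ∑ a : Fin r → Fin f,
            (-1 : ℂ) ^ (∑ j, (a j : ℕ)) * (∏ j, χ (((a j : ℕ) : ℕ) : ZMod f)) *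
              ((q ^ (∑ j : Fin r, (h - ((j : ℤ) + 1) + 1) * ((a j : ℕ) : ℤ)) : ℝ) : ℂ) *
                ((1 + (q : ℂ) ^ f) ^ r * ∑' k : Fin r → ℕ,
                  (-1 : ℂ) ^ (∑ j, k j) *
                    (((q ^ f) ^ (∑ j : Fin r, (h - ((j : ℤ) + 1) + 1) * (k j : ℤ)) : ℝ) : ℂ) *
                      ((qnum (q ^ f)
                        (((∑ j, k j : ℕ) : ℝ) + (x + ∑ j, ((a j : ℕ) : ℝ)) / f) : ℝ) : ℂ)
                        ^ (-s)) :=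
  stmt10_general f hf χ r h hh q hq0 hq1 x hx s
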